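/- arXiv:2512.25042 — 2 statements merged into one kernel-verified Lean document; each statement's English description precedes it below -/
import Mathlib

section
/- Let Y ~ Bin(n, θ) with n ≥ 2 and θ ∈ [0,1], and let h : {0,…,n} → ℝ be the restriction of a polynomial of degree strictly less than n. Then θ·E[h(Y)] = E[ 1{Y > 0} · Σ_{j=0}^{n−Y} h(Y+j)·(−1)^j · [(n−Y)!/(n−Y−j)!]·[Y!/(Y+j)!] ]. That is, the displayed statistic is an unbiased estimator of θ·E[h(Y)]. -/
/-- Binomial expectation of `f` under `Bin(n, θ)`. -/
noncomputable def binomExp (n : ℕ) (θ : ℝ) (f : ℕ → ℝ) : ℝ :=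
  ∑ k ∈ Finset.range (n + 1), f k * (n.choose k : ℝ) * θ ^ k * (1 - θ) ^ (n - k)

/-- The transform `T₁h`. -/
noncomputable def T1 (n : ℕ) (h : ℕ → ℝ) (y : ℕ) : ℝ :=
  if 0 < y then
    ∑ j ∈ Finset.range (n - y + 1),
      h (y + j) * (-1 : ℝ) ^ j * (((n - y).factorial : ℝ) / ((n - y - j).factorial : ℝ))
        * ((y.factorial : ℝ) / ((y + j).factorial : ℝ))
  else 0

/-!
Since `C(n,y)·(n-y)!/(n-y-j)!·y!/(y+j)! = C(n,y+j)`, the expectation of `T₁h(Y)` is a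
triangular double sum over `1 ≤ y ≤ k ≤ n`. Summing over `y` first gives a geometric sum, and
one finds `E[T₁h(Y)] = θ·E[h(Y)] - θ(θ-1)ⁿ·Δⁿh(0)` for every `h`. The `n`-th forward
difference of a polynomial of degree `< n` vanishes.
-/

open Finset Nat fwdDiff

theorem choose_mul_factorial_div_mul_factorial_div {K : Type*} [Field K] [CharZero K]
    {n y j : ℕ} (h : y + j ≤ n) :
    (n.choose y : K) * ((n - y)! / (n - y - j)!) * (y ! / (y + j)!) = n.choose (y + j) := by
  have hy := Nat.choose_mul_factorial_mul_factorial (n := n) (k := y) (by omega)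
  have hyj := Nat.choose_mul_factorial_mul_factorial h
  rw [Nat.sub_sub]
  field_simp
  rw [div_eq_iff (by simp [Nat.factorial_ne_zero])]
  norm_cast
  linarith

theorem T1_mul_choose {n y : ℕ} (h : ℕ → ℝ) (hy : 0 < y) (hyn : y ≤ n) :
    T1 n h y * n.choose y = ∑ k ∈ Ico y (n + 1), (-1) ^ (k - y) * n.choose k * h k := by
  rw [T1, if_pos hy, sum_Ico_eq_sum_range, show n + 1 - y = n - y + 1 by omega, sum_mul]
  refine sum_congr rfl fun j hj => ?_
  rw [← choose_mul_factorial_div_mul_factorial_div (K := ℝ) (by simp at hj; omega),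
    Nat.add_sub_cancel_left]
  ring

theorem sum_Ico_one_pow_mul_sub_one_pow {R : Type*} [CommRing R] (x : R) (k : ℕ) :
    ∑ i ∈ Ico 1 (k + 1), x ^ i * (x - 1) ^ (k - i) = x * (x ^ k - (x - 1) ^ k) := by
  rw [sum_Ico_eq_sum_range, Nat.add_sub_cancel, ← geom_sum₂_mul, sub_sub_cancel, mul_one,
    mul_sum]
  refine sum_congr rfl fun i hi => ?_
  rw [pow_add, Nat.sub_sub, add_comm 1 i]
  ring

theorem binomExp_T1 (n : ℕ) (θ : ℝ) (h : ℕ → ℝ) :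
    binomExp n θ (T1 n h) = θ * binomExp n θ h - θ * (θ - 1) ^ n * (Δ_[1])^[n] h 0 := by
  have hshift : (Δ_[1])^[n] h 0 = ∑ k ∈ range (n + 1), (-1) ^ (n - k) * n.choose k * h k := by
    simp [fwdDiff_iter_eq_sum_shift, zsmul_eq_mul]
  have hinner : ∀ k ∈ Ico 1 (n + 1), ∑ y ∈ Ico 1 (k + 1),
      (-1) ^ (k - y) * n.choose k * h k * θ ^ y * (1 - θ) ^ (n - y)
        = h k * n.choose k * (1 - θ) ^ (n - k) * (θ * (θ ^ k - (θ - 1) ^ k)) := by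
    intro k hk
    rw [← sum_Ico_one_pow_mul_sub_one_pow, mul_sum]
    refine sum_congr rfl fun y hy => ?_
    simp only [mem_Ico] at hk hy
    have hsign : (θ - 1) ^ (k - y) = (-1) ^ (k - y) * (1 - θ) ^ (k - y) := by
      rw [← mul_pow]; ring
    rw [show n - y = (n - k) + (k - y) by omega, pow_add, hsign]
    ring
  calc binomExp n θ (T1 n h)
      = ∑ y ∈ Ico 1 (n + 1), ∑ k ∈ Ico y (n + 1),
          (-1) ^ (k - y) * n.choose k * h k * θ ^ y * (1 - θ) ^ (n - y) := by
        rw [binomExp, range_eq_Ico, sum_eq_sum_Ico_succ_bot (Nat.succ_pos n),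
          show T1 n h 0 = 0 from if_neg (lt_irrefl 0), zero_mul, zero_mul, zero_mul, zero_add]
        refine sum_congr rfl fun y hy => ?_
        simp only [mem_Ico] at hy
        rw [mul_assoc, mul_assoc, ← mul_assoc, T1_mul_choose h (by omega) (by omega), sum_mul]
        exact sum_congr rfl fun _ _ => by ring
    _ = ∑ k ∈ Ico 1 (n + 1),
          h k * n.choose k * (1 - θ) ^ (n - k) * (θ * (θ ^ k - (θ - 1) ^ k)) := by
        rw [sum_Ico_Ico_comm, sum_congr rfl hinner]
    _ = ∑ k ∈ range (n + 1),
          h k * n.choose k * (1 - θ) ^ (n - k) * (θ * (θ ^ k - (θ - 1) ^ k)) := by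
        rw [range_eq_Ico, sum_eq_sum_Ico_succ_bot (Nat.succ_pos n)]
        simp
    _ = _ := by
        rw [hshift, binomExp, mul_sum, mul_sum, ← sum_sub_distrib]
        refine sum_congr rfl fun k hk => ?_
        obtain ⟨m, rfl⟩ := Nat.exists_eq_add_of_le (Nat.le_of_lt_succ (mem_range.1 hk))
        have hsign : (θ - 1) ^ m * (-1) ^ m = (1 - θ) ^ m := by rw [← mul_pow]; ring
        rw [Nat.add_sub_cancel_left, pow_add, ← hsign]
        ring

theorem fwdDiff_iter_eq_zero_of_eq_poly {R : Type*} [CommRing R] {n : ℕ} {f : ℕ → R}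
    (w : ℕ → R) (hf : ∀ j ≤ n, f j = ∑ r ∈ range n, w r * (j : R) ^ r) :
    (Δ_[1])^[n] f 0 = 0 := by
  have hpoly := congrFun (fwdDiff_iter_sum_mul_pow_eq_zero (n := n) w) 0
  rw [fwdDiff_iter_eq_sum_shift, Pi.zero_apply] at hpoly
  rw [fwdDiff_iter_eq_sum_shift, ← hpoly]
  refine sum_congr rfl fun k hk => ?_
  simp only [zero_add, smul_eq_mul, nsmul_eq_mul, mul_one]
  rw [hf k (Nat.le_of_lt_succ (mem_range.1 hk))]

theorem T1_unbiased_of_poly_general (n : ℕ) (θ : ℝ)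
    (h : ℕ → ℝ) (w : ℕ → ℝ)
    (hh : ∀ j ≤ n, h j = ∑ r ∈ Finset.range n, w r * (j : ℝ) ^ r) :
    θ * binomExp n θ h = binomExp n θ (T1 n h) := by
  rw [binomExp_T1, fwdDiff_iter_eq_zero_of_eq_poly w hh, mul_zero, sub_zero]

/-- If `h` is (the restriction of) a polynomial of degree `< n`, then `T₁h(Y)` is
an unbiased estimator of `θ·E[h(Y)]`. -/
theorem T1_unbiased_of_poly (n : ℕ) (hn : 2 ≤ n) (θ : ℝ) (hθ : θ ∈ Set.Icc (0 : ℝ) 1)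
    (h : ℕ → ℝ) (w : ℕ → ℝ)
    (hh : ∀ j ≤ n, h j = ∑ r ∈ Finset.range n, w r * (j : ℝ) ^ r) :
    θ * binomExp n θ h = binomExp n θ (T1 n h) :=
  T1_unbiased_of_poly_general n θ h w hh
end

section
/- Fix an integer n ≥ 1, a function h : {0,…,n} → ℝ, and an integer y with 0 < y < n. Define T₁h(y) := Σ_{j=0}^{n−y} h(y+j)(−1)^j [(n−y)!/(n−y−j)!][y!/(y+j)!] and T₂h(y) := h(y) − Σ_{j=0}^{y} h(y−j)(−1)^j [y!/(y−j)!][(n−y)!/(n−y+j)!]. Then T₁h(y) − T₂h(y) = (−1)^y · C(n,y)^{−1} · Δh, where Δh := Σ_{j=0}^{n} h(j)(−1)^j C(n,j). Moreover T₁h and T₂h (with the indicator conventions T₁h(0) = 0 and T₂h(n) = h(n)) agree at y = 0 and y = n. -/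
/-- The transform `T₂h` (with the indicator convention `T₂h(n) = h(n)`). -/
noncomputable def T2 (n : ℕ) (h : ℕ → ℝ) (y : ℕ) : ℝ :=
  h y - (if y < n then
    ∑ j ∈ Finset.range (y + 1),
      h (y - j) * (-1 : ℝ) ^ j * ((y.factorial : ℝ) / ((y - j).factorial : ℝ))
        * (((n - y).factorial : ℝ) / ((n - y + j).factorial : ℝ))
  else 0)

/-- Alternating binomial sum `Δh`. -/
noncomputable def deltaH (n : ℕ) (h : ℕ → ℝ) : ℝ :=
  ∑ j ∈ Finset.range (n + 1), h j * (-1 : ℝ) ^ j * (n.choose j : ℝ)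

/-!
Every summand of `T₁h(y)` and of the sum in `T₂h(y)` is, after multiplying by
`(-1)^y C(n,y)`, the term `h(k)(-1)^k C(n,k)` of `Δh`, because
`C(n,k)/C(n,y) = y!(n-y)!/(k!(n-k)!)`. So `T₁h(y)` is `Δh` restricted to `k ≥ y` and the sum
in `T₂h(y)` is `Δh` restricted to `k ≤ y`, both scaled by `(-1)^y/C(n,y)`; their sum
counts `k = y` twice, and that extra term is exactly `h(y)`.
-/

open Finset Nat

lemma neg_one_pow_two_mul_add {M : Type*} [Monoid M] [HasDistribNeg M] (m j : ℕ) :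
    (-1 : M) ^ (2 * m + j) = (-1) ^ j := by
  rw [pow_add, pow_mul, neg_one_sq, one_pow, one_mul]

lemma choose_inv_mul_choose {n y k : ℕ} (hy : y ≤ n) (hk : k ≤ n) :
    (n.choose y : ℝ)⁻¹ * n.choose k
      = (y ! * (n - y)! : ℝ) / (k ! * (n - k)! : ℝ) := by
  have hcy : (n.choose y : ℝ) ≠ 0 := Nat.cast_ne_zero.mpr (Nat.choose_pos hy).ne'
  have hfact : (n.choose k * (k ! * (n - k)!) : ℝ) = n.choose y * (y ! * (n - y)!) := by
    rw [← mul_assoc, ← mul_assoc]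
    exact_mod_cast (Nat.choose_mul_factorial_mul_factorial hk).trans
      (Nat.choose_mul_factorial_mul_factorial hy).symm
  field_simp
  linear_combination hfact

noncomputable def deltaTerm (n : ℕ) (h : ℕ → ℝ) (k : ℕ) : ℝ :=
  h k * (-1 : ℝ) ^ k * (n.choose k : ℝ)

lemma deltaH_eq_sum_deltaTerm (n : ℕ) (h : ℕ → ℝ) :
    deltaH n h = ∑ k ∈ range (n + 1), deltaTerm n h k := rfl

section Rescaling

variable {n y : ℕ} (h : ℕ → ℝ)

lemma scaled_deltaTerm_eq {k : ℕ} (hy : y ≤ n) (hk : k ≤ n) :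
    (-1 : ℝ) ^ y * (n.choose y : ℝ)⁻¹ * deltaTerm n h k
      = h k * (-1 : ℝ) ^ (y + k) * ((y ! * (n - y)! : ℝ) / (k ! * (n - k)! : ℝ)) := by
  rw [deltaTerm, ← choose_inv_mul_choose hy hk, pow_add]
  ring

lemma scaled_deltaTerm_self (hy : y ≤ n) :
    (-1 : ℝ) ^ y * (n.choose y : ℝ)⁻¹ * deltaTerm n h y = h y := by
  rw [scaled_deltaTerm_eq h hy hy, ← two_mul, ← add_zero (2 * y), neg_one_pow_two_mul_add,
    div_self (by positivity)]
  ring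

lemma T1_eq_scaled_sum_Ico (hy0 : 0 < y) (hyn : y ≤ n) :
    T1 n h y = (-1 : ℝ) ^ y * (n.choose y : ℝ)⁻¹ * ∑ k ∈ Ico y (n + 1), deltaTerm n h k := by
  rw [T1, if_pos hy0, mul_sum, sum_Ico_eq_sum_range, show n + 1 - y = n - y + 1 by omega]
  refine sum_congr rfl fun j hj => ?_
  have hj : j ≤ n - y := Nat.lt_succ_iff.mp (mem_range.mp hj)
  rw [scaled_deltaTerm_eq h hyn (by omega), ← add_assoc, ← two_mul, neg_one_pow_two_mul_add,
    show n - (y + j) = n - y - j by omega]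
  ring

lemma sum_T2_eq_scaled_sum_range (hyn : y ≤ n) :
    ∑ j ∈ range (y + 1),
        h (y - j) * (-1 : ℝ) ^ j * ((y ! : ℝ) / ((y - j)! : ℝ))
          * (((n - y)! : ℝ) / ((n - y + j)! : ℝ))
      = (-1 : ℝ) ^ y * (n.choose y : ℝ)⁻¹ * ∑ k ∈ range (y + 1), deltaTerm n h k := by
  rw [mul_sum, ← sum_range_reflect]
  refine sum_congr rfl fun j hj => ?_
  have hj : j ≤ y := Nat.lt_succ_iff.mp (mem_range.mp hj)
  rw [show y + 1 - 1 - j = y - j by omega, scaled_deltaTerm_eq h hyn (by omega),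
    show y - (y - j) = j by omega, show n - y + (y - j) = n - j by omega,
    show y + j = 2 * j + (y - j) by omega, neg_one_pow_two_mul_add]
  ring

end Rescaling

lemma T1_zero (n : ℕ) (h : ℕ → ℝ) : T1 n h 0 = 0 := if_neg (lt_irrefl 0)

lemma T2_zero {n : ℕ} (hn : 0 < n) (h : ℕ → ℝ) : T2 n h 0 = 0 := by
  simp [T2, hn, Nat.factorial_ne_zero]

lemma T1_self {n : ℕ} (hn : 0 < n) (h : ℕ → ℝ) : T1 n h n = h n := by
  simp [T1, hn, Nat.factorial_ne_zero]

lemma T2_self (n : ℕ) (h : ℕ → ℝ) : T2 n h n = h n := by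
  simp [T2]

theorem T1_sub_T2_general (n y : ℕ) (h : ℕ → ℝ) (hy0 : 0 < y) (hyn : y < n) :
    (T1 n h y - T2 n h y = (-1 : ℝ) ^ y * ((n.choose y : ℝ))⁻¹ * deltaH n h)
    ∧ T1 n h 0 = T2 n h 0 ∧ T1 n h n = T2 n h n := by
  have hn : 0 < n := hy0.trans hyn
  refine ⟨?_, by rw [T1_zero, T2_zero hn], by rw [T1_self hn, T2_self]⟩
  have hsplit : ∑ k ∈ Ico y (n + 1), deltaTerm n h k + ∑ k ∈ range (y + 1), deltaTerm n h k
      = deltaH n h + deltaTerm n h y := by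
    rw [sum_range_succ, deltaH_eq_sum_deltaTerm, ← sum_range_add_sum_Ico _ (by omega : y ≤ n + 1)]
    ring
  rw [T2, if_pos hyn, sum_T2_eq_scaled_sum_range h hyn.le, T1_eq_scaled_sum_Ico h hy0 hyn.le]
  rw [← scaled_deltaTerm_self h hyn.le]
  linear_combination (-1 : ℝ) ^ y * (n.choose y : ℝ)⁻¹ * hsplit

/-- For `0 < y < n`: `T₁h(y) − T₂h(y) = (−1)^y·C(n,y)⁻¹·Δh`, and moreover the two
transforms agree at `y = 0` and `y = n`. -/
theorem T1_sub_T2 (n y : ℕ) (hn : 1 ≤ n) (h : ℕ → ℝ) (hy0 : 0 < y) (hyn : y < n) :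
    (T1 n h y - T2 n h y = (-1 : ℝ) ^ y * ((n.choose y : ℝ))⁻¹ * deltaH n h)
    ∧ T1 n h 0 = T2 n h 0 ∧ T1 n h n = T2 n h n :=
  T1_sub_T2_general n y h hy0 hyn
end
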